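/- If u(ξ,η,τ) is a (smooth) solution of the Kadomtsev–Petviashvili equation (u_τ + (1/4)u_ξξξ + (3/2)u u_ξ)_ξ = -(3α²/4) u_ηη, then the function v(x,y,t) = u(x - y²t/(48α²), yt/4, t) satisfies the Johnson equation (v_t + (1/4)v_xxx + (3/2)v v_x + v/(2t))_x = -(12α²/t²) v_yy for t > 0. -/

import Mathlib

/-- Partial derivative in the first variable. -/
noncomputable def pd1 (u : ℝ → ℝ → ℝ → ℝ) (x y t : ℝ) : ℝ := deriv (fun s => u s y t) x
/-- Partial derivative in the second variable. -/
noncomputable def pd2 (u : ℝ → ℝ → ℝ → ℝ) (x y t : ℝ) : ℝ := deriv (fun s => u x s t) y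
/-- Partial derivative in the third variable. -/
noncomputable def pd3 (u : ℝ → ℝ → ℝ → ℝ) (x y t : ℝ) : ℝ := deriv (fun s => u x y s) t


noncomputable def Dv (w : ℝ×ℝ×ℝ) (F : ℝ×ℝ×ℝ → ℝ) : ℝ×ℝ×ℝ → ℝ := fun p => fderiv ℝ F p w

noncomputable def phiJ (α : ℝ) : ℝ×ℝ×ℝ → ℝ×ℝ×ℝ :=
  fun p => (p.1 - p.2.1^2 * p.2.2 / (48 * α^2), (p.2.1 * p.2.2 / 4, p.2.2))

noncomputable def Kf (F : ℝ×ℝ×ℝ → ℝ) : ℝ×ℝ×ℝ → ℝ :=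
  fun q => Dv (0,0,1) F q + (1/4) * Dv (1,0,0) (Dv (1,0,0) (Dv (1,0,0) F)) q
    + (3/2) * F q * Dv (1,0,0) F q

lemma contDiff_Dv (w : ℝ×ℝ×ℝ) {F : ℝ×ℝ×ℝ → ℝ} (hF : ContDiff ℝ (⊤ : ℕ∞) F) :
    ContDiff ℝ (⊤ : ℕ∞) (Dv w F) :=
  (ContinuousLinearMap.apply ℝ ℝ w).contDiff.comp (hF.fderiv_right (by simp))

lemma contDiff_Kf {F : ℝ×ℝ×ℝ → ℝ} (hF : ContDiff ℝ (⊤ : ℕ∞) F) : ContDiff ℝ (⊤ : ℕ∞) (Kf F) := by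
  unfold Kf
  exact ((contDiff_Dv _ hF).add
      (contDiff_const.mul (contDiff_Dv _ (contDiff_Dv _ (contDiff_Dv _ hF))))).add
    ((contDiff_const.mul hF).mul (contDiff_Dv _ hF))

lemma hasDerivAt_comp_curve {F : ℝ×ℝ×ℝ → ℝ} (hF : ContDiff ℝ (⊤ : ℕ∞) F) {γ : ℝ → ℝ×ℝ×ℝ} {w : ℝ×ℝ×ℝ}
    {s : ℝ} (hγ : HasDerivAt γ w s) :
    HasDerivAt (fun r => F (γ r)) (fderiv ℝ F (γ s) w) s :=
  ((hF.differentiable (by simp) (γ s)).hasFDerivAt.comp_hasDerivAt s hγ)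

lemma fderiv_expand (F : ℝ×ℝ×ℝ → ℝ) (p : ℝ×ℝ×ℝ) (a b c : ℝ) :
    fderiv ℝ F p (a,b,c) = a * Dv (1,0,0) F p + b * Dv (0,1,0) F p + c * Dv (0,0,1) F p := by
  have h : ((a,b,c) : ℝ×ℝ×ℝ)
      = a • ((1:ℝ),(0:ℝ),(0:ℝ)) + b • ((0:ℝ),(1:ℝ),(0:ℝ)) + c • ((0:ℝ),(0:ℝ),(1:ℝ)) := by
    simp [Prod.ext_iff]
  rw [h, map_add, map_add, map_smul, map_smul, map_smul]
  simp [Dv]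

lemma symm2 {F : ℝ×ℝ×ℝ → ℝ} (hF : ContDiff ℝ (⊤ : ℕ∞) F) (p : ℝ×ℝ×ℝ) (v w : ℝ×ℝ×ℝ) :
    Dv w (Dv v F) p = Dv v (Dv w F) p := by
  have hsym := (hF.contDiffAt (x := p)).isSymmSndFDerivAt (by simp only [minSmoothness_of_isRCLikeNormedField]; exact WithTop.coe_le_coe.2 le_top)
  have hd : DifferentiableAt ℝ (fderiv ℝ F) p :=
    ((hF.fderiv_right (m := (⊤ : ℕ∞)) (by simp)).differentiable (by simp)) p
  have key : ∀ z z' : ℝ×ℝ×ℝ, Dv z' (Dv z F) p = fderiv ℝ (fderiv ℝ F) p z' z := by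
    intro z z'
    have h1 : (fun q => fderiv ℝ F q z) = (ContinuousLinearMap.apply ℝ ℝ z) ∘ fderiv ℝ F := rfl
    have h2 : fderiv ℝ (fun q => fderiv ℝ F q z) p
        = (ContinuousLinearMap.apply ℝ ℝ z).comp (fderiv ℝ (fderiv ℝ F) p) := by
      rw [h1, fderiv_comp p (ContinuousLinearMap.differentiableAt _) hd,
        ContinuousLinearMap.fderiv]
    show fderiv ℝ (fun q => fderiv ℝ F q z) p z' = _
    rw [h2]; rfl
  rw [key, key, hsym v w]

lemma pdc1 {F : ℝ×ℝ×ℝ → ℝ} (hF : ContDiff ℝ (⊤ : ℕ∞) F) (x y t : ℝ) :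
    pd1 (fun a b c => F (a,b,c)) x y t = Dv (1,0,0) F (x,y,t) := by
  have hγ : HasDerivAt (fun s : ℝ => ((s,y,t) : ℝ×ℝ×ℝ)) (1,0,0) x :=
    (hasDerivAt_id x).prodMk ((hasDerivAt_const x y).prodMk (hasDerivAt_const x t))
  exact (hasDerivAt_comp_curve hF hγ).deriv

lemma pdc2 {F : ℝ×ℝ×ℝ → ℝ} (hF : ContDiff ℝ (⊤ : ℕ∞) F) (x y t : ℝ) :
    pd2 (fun a b c => F (a,b,c)) x y t = Dv (0,1,0) F (x,y,t) := by
  have hγ : HasDerivAt (fun s : ℝ => ((x,s,t) : ℝ×ℝ×ℝ)) (0,1,0) y :=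
    (hasDerivAt_const y x).prodMk ((hasDerivAt_id y).prodMk (hasDerivAt_const y t))
  exact (hasDerivAt_comp_curve hF hγ).deriv

lemma pdc3 {F : ℝ×ℝ×ℝ → ℝ} (hF : ContDiff ℝ (⊤ : ℕ∞) F) (x y t : ℝ) :
    pd3 (fun a b c => F (a,b,c)) x y t = Dv (0,0,1) F (x,y,t) := by
  have hγ : HasDerivAt (fun s : ℝ => ((x,y,s) : ℝ×ℝ×ℝ)) (0,0,1) t :=
    (hasDerivAt_const t x).prodMk ((hasDerivAt_const t y).prodMk (hasDerivAt_id t))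
  exact (hasDerivAt_comp_curve hF hγ).deriv

lemma hasDerivAt_phi1 (α x y t : ℝ) :
    HasDerivAt (fun s : ℝ => phiJ α (s,y,t)) ((1:ℝ),(0:ℝ),(0:ℝ)) x := by
  have h1 : HasDerivAt (fun s : ℝ => s - y^2 * t / (48 * α^2)) 1 x :=
    (hasDerivAt_id x).sub_const _
  exact h1.prodMk (hasDerivAt_const x (y * t / 4, t))

lemma hasDerivAt_phi2 (α x y t : ℝ) :
    HasDerivAt (fun s : ℝ => phiJ α (x,s,t)) (-(2*y*t/(48*α^2)), (t/4, 0)) y := by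
  have h1 : HasDerivAt (fun s : ℝ => x - s^2 * t / (48 * α^2)) (-(2*y*t/(48*α^2))) y := by
    have h := (((hasDerivAt_pow 2 y).mul_const t).div_const (48 * α^2)).const_sub x
    exact h.congr_deriv (by push_cast; ring)
  have h2 : HasDerivAt (fun s : ℝ => s * t / 4) (t/4) y := by
    have h := ((hasDerivAt_id y).mul_const t).div_const 4
    exact h.congr_deriv (by ring)
  exact h1.prodMk (h2.prodMk (hasDerivAt_const y t))

lemma hasDerivAt_phi3 (α x y t : ℝ) :
    HasDerivAt (fun s : ℝ => phiJ α (x,y,s)) (-(y^2/(48*α^2)), (y/4, 1)) t := by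
  have h1 : HasDerivAt (fun s : ℝ => x - y^2 * s / (48 * α^2)) (-(y^2/(48*α^2))) t := by
    have h := (((hasDerivAt_id t).const_mul (y^2)).div_const (48 * α^2)).const_sub x
    exact h.congr_deriv (by ring)
  have h2 : HasDerivAt (fun s : ℝ => y * s / 4) (y/4) t := by
    have h := (((hasDerivAt_id t).const_mul y).div_const 4)
    exact h.congr_deriv (by ring)
  exact h1.prodMk (h2.prodMk (hasDerivAt_id t))

lemma pdp1 {F : ℝ×ℝ×ℝ → ℝ} (hF : ContDiff ℝ (⊤ : ℕ∞) F) (α x y t : ℝ) :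
    pd1 (fun a b c => F (phiJ α (a,b,c))) x y t = Dv (1,0,0) F (phiJ α (x,y,t)) :=
  (hasDerivAt_comp_curve hF (hasDerivAt_phi1 α x y t)).deriv

lemma pdp2 {F : ℝ×ℝ×ℝ → ℝ} (hF : ContDiff ℝ (⊤ : ℕ∞) F) (α x y t : ℝ) :
    pd2 (fun a b c => F (phiJ α (a,b,c))) x y t
      = (-(2*y*t/(48*α^2))) * Dv (1,0,0) F (phiJ α (x,y,t))
        + (t/4) * Dv (0,1,0) F (phiJ α (x,y,t)) := by
  have h := (hasDerivAt_comp_curve hF (hasDerivAt_phi2 α x y t)).deriv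
  rw [fderiv_expand] at h
  exact h.trans (by ring)

lemma pdp3 {F : ℝ×ℝ×ℝ → ℝ} (hF : ContDiff ℝ (⊤ : ℕ∞) F) (α x y t : ℝ) :
    pd3 (fun a b c => F (phiJ α (a,b,c))) x y t
      = (-(y^2/(48*α^2))) * Dv (1,0,0) F (phiJ α (x,y,t))
        + (y/4) * Dv (0,1,0) F (phiJ α (x,y,t))
        + Dv (0,0,1) F (phiJ α (x,y,t)) := by
  have h := (hasDerivAt_comp_curve hF (hasDerivAt_phi3 α x y t)).deriv
  rw [fderiv_expand] at h
  exact h.trans (by ring)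

theorem stmt0 (α : ℝ) (hα : α ≠ 0) (u : ℝ → ℝ → ℝ → ℝ)
    (hu : ContDiff ℝ (⊤ : ℕ∞) (fun p : ℝ × ℝ × ℝ => u p.1 p.2.1 p.2.2))
    (hKP : ∀ ξ η τ : ℝ,
      pd1 (fun a b c => pd3 u a b c + (1/4) * pd1 (pd1 (pd1 u)) a b c
        + (3/2) * u a b c * pd1 u a b c) ξ η τ
      = -(3 * α^2 / 4) * pd2 (pd2 u) ξ η τ) :
    ∀ x y t : ℝ, 0 < t →
      pd1 (fun a b c =>
          pd3 (fun x y t => u (x - y^2 * t / (48 * α^2)) (y * t / 4) t) a b c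
          + (1/4) * pd1 (pd1 (pd1 (fun x y t => u (x - y^2 * t / (48 * α^2)) (y * t / 4) t))) a b c
          + (3/2) * u (a - b^2 * c / (48 * α^2)) (b * c / 4) c
              * pd1 (fun x y t => u (x - y^2 * t / (48 * α^2)) (y * t / 4) t) a b c
          + u (a - b^2 * c / (48 * α^2)) (b * c / 4) c / (2 * c)) x y t
      = -(12 * α^2 / t^2)
          * pd2 (pd2 (fun x y t => u (x - y^2 * t / (48 * α^2)) (y * t / 4) t)) x y t := by
  intro x y t ht
  set F : ℝ×ℝ×ℝ → ℝ := fun p : ℝ × ℝ × ℝ => u p.1 p.2.1 p.2.2 with hFdef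
  set V : ℝ → ℝ → ℝ → ℝ := fun x y t => u (x - y^2 * t / (48 * α^2)) (y * t / 4) t with hVdef
  have hF : ContDiff ℝ (⊤ : ℕ∞) F := hu
  have hF1 : ContDiff ℝ (⊤ : ℕ∞) (Dv (1,0,0) F) := contDiff_Dv _ hF
  have hF11 : ContDiff ℝ (⊤ : ℕ∞) (Dv (1,0,0) (Dv (1,0,0) F)) := contDiff_Dv _ hF1
  have hF2 : ContDiff ℝ (⊤ : ℕ∞) (Dv (0,1,0) F) := contDiff_Dv _ hF
  have hKf : ContDiff ℝ (⊤ : ℕ∞) (Kf F) := contDiff_Kf hF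
  -- translate KP to Dv language
  have E1u : ∀ a b c : ℝ, pd1 u a b c = Dv (1,0,0) F (a,b,c) := fun a b c => pdc1 hF a b c
  have hfun1 : pd1 u = fun a b c => Dv (1,0,0) F (a,b,c) := by
    funext a b c; exact E1u a b c
  have E11u : ∀ a b c : ℝ, pd1 (pd1 u) a b c = Dv (1,0,0) (Dv (1,0,0) F) (a,b,c) := by
    intro a b c; rw [hfun1]; exact pdc1 hF1 a b c
  have hfun11 : pd1 (pd1 u) = fun a b c => Dv (1,0,0) (Dv (1,0,0) F) (a,b,c) := by
    funext a b c; exact E11u a b c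
  have E111u : ∀ a b c : ℝ, pd1 (pd1 (pd1 u)) a b c
      = Dv (1,0,0) (Dv (1,0,0) (Dv (1,0,0) F)) (a,b,c) := by
    intro a b c; rw [hfun11]; exact pdc1 hF11 a b c
  have E3u : ∀ a b c : ℝ, pd3 u a b c = Dv (0,0,1) F (a,b,c) := fun a b c => pdc3 hF a b c
  have E2u : ∀ a b c : ℝ, pd2 u a b c = Dv (0,1,0) F (a,b,c) := fun a b c => pdc2 hF a b c
  have hfun2 : pd2 u = fun a b c => Dv (0,1,0) F (a,b,c) := by
    funext a b c; exact E2u a b c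
  have E22u : ∀ a b c : ℝ, pd2 (pd2 u) a b c = Dv (0,1,0) (Dv (0,1,0) F) (a,b,c) := by
    intro a b c; rw [hfun2]; exact pdc2 hF2 a b c
  have hKP' : ∀ p : ℝ×ℝ×ℝ, Dv (1,0,0) (Kf F) p
      = -(3 * α^2 / 4) * Dv (0,1,0) (Dv (0,1,0) F) p := by
    rintro ⟨a,b,c⟩
    have h := hKP a b c
    have hbig : (fun a b c => pd3 u a b c + (1/4) * pd1 (pd1 (pd1 u)) a b c
        + (3/2) * u a b c * pd1 u a b c) = fun a b c => Kf F (a,b,c) := by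
      funext a b c
      rw [E3u a b c, E111u a b c, E1u a b c]
      rfl
    rw [hbig, pdc1 hKf a b c, E22u a b c] at h
    exact h
  -- derivatives of V
  have EV1 : ∀ a b c : ℝ, pd1 V a b c = Dv (1,0,0) F (phiJ α (a,b,c)) :=
    fun a b c => pdp1 hF α a b c
  have hfunV1 : pd1 V = fun a b c => Dv (1,0,0) F (phiJ α (a,b,c)) := by
    funext a b c; exact EV1 a b c
  have EV11 : ∀ a b c : ℝ, pd1 (pd1 V) a b c = Dv (1,0,0) (Dv (1,0,0) F) (phiJ α (a,b,c)) := by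
    intro a b c; rw [hfunV1]; exact pdp1 hF1 α a b c
  have hfunV11 : pd1 (pd1 V) = fun a b c => Dv (1,0,0) (Dv (1,0,0) F) (phiJ α (a,b,c)) := by
    funext a b c; exact EV11 a b c
  have EV111 : ∀ a b c : ℝ, pd1 (pd1 (pd1 V)) a b c
      = Dv (1,0,0) (Dv (1,0,0) (Dv (1,0,0) F)) (phiJ α (a,b,c)) := by
    intro a b c; rw [hfunV11]; exact pdp1 hF11 α a b c
  have EV3 : ∀ a b c : ℝ, pd3 V a b c
      = (-(b^2/(48*α^2))) * Dv (1,0,0) F (phiJ α (a,b,c))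
        + (b/4) * Dv (0,1,0) F (phiJ α (a,b,c))
        + Dv (0,0,1) F (phiJ α (a,b,c)) :=
    fun a b c => pdp3 hF α a b c
  have EV2 : ∀ a b c : ℝ, pd2 V a b c
      = (-(2*b*c/(48*α^2))) * Dv (1,0,0) F (phiJ α (a,b,c))
        + (c/4) * Dv (0,1,0) F (phiJ α (a,b,c)) :=
    fun a b c => pdp2 hF α a b c
  have hfunV2 : pd2 V = fun a b c =>
      (-(2*b*c/(48*α^2))) * Dv (1,0,0) F (phiJ α (a,b,c))
        + (c/4) * Dv (0,1,0) F (phiJ α (a,b,c)) := by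
    funext a b c; exact EV2 a b c
  have huF : ∀ a b c : ℝ, u (a - b^2 * c / (48 * α^2)) (b * c / 4) c = F (phiJ α (a,b,c)) :=
    fun _ _ _ => rfl
  -- rewrite the bracket
  have hB : (fun a b c =>
          pd3 V a b c
          + (1/4) * pd1 (pd1 (pd1 V)) a b c
          + (3/2) * u (a - b^2 * c / (48 * α^2)) (b * c / 4) c * pd1 V a b c
          + u (a - b^2 * c / (48 * α^2)) (b * c / 4) c / (2 * c))
      = fun a b c => Kf F (phiJ α (a,b,c))
          + (-(b^2/(48*α^2))) * Dv (1,0,0) F (phiJ α (a,b,c))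
          + (b/4) * Dv (0,1,0) F (phiJ α (a,b,c))
          + F (phiJ α (a,b,c)) / (2*c) := by
    funext a b c
    rw [EV3 a b c, EV111 a b c, EV1 a b c, huF a b c]
    unfold Kf
    ring
  set q : ℝ×ℝ×ℝ := phiJ α (x,y,t) with hq
  -- left-hand side derivative
  have TL : HasDerivAt (fun s => Kf F (phiJ α (s,y,t))
          + (-(y^2/(48*α^2))) * Dv (1,0,0) F (phiJ α (s,y,t))
          + (y/4) * Dv (0,1,0) F (phiJ α (s,y,t))
          + F (phiJ α (s,y,t)) / (2*t))
      (Dv (1,0,0) (Kf F) q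
        + (-(y^2/(48*α^2))) * Dv (1,0,0) (Dv (1,0,0) F) q
        + (y/4) * Dv (1,0,0) (Dv (0,1,0) F) q
        + Dv (1,0,0) F q / (2*t)) x := by
    exact (((hasDerivAt_comp_curve hKf (hasDerivAt_phi1 α x y t)).add
        ((hasDerivAt_comp_curve hF1 (hasDerivAt_phi1 α x y t)).const_mul _)).add
        ((hasDerivAt_comp_curve hF2 (hasDerivAt_phi1 α x y t)).const_mul _)).add
        ((hasDerivAt_comp_curve hF (hasDerivAt_phi1 α x y t)).div_const _)
  -- right-hand side derivative
  have ha : HasDerivAt (fun s : ℝ => -(2*s*t/(48*α^2))) (-(2*t/(48*α^2))) y := by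
    have h := ((((hasDerivAt_id y).const_mul 2).mul_const t).div_const (48*α^2)).neg
    exact h.congr_deriv (by ring)
  have TR : HasDerivAt (fun s =>
        (-(2*s*t/(48*α^2))) * Dv (1,0,0) F (phiJ α (x,s,t))
          + (t/4) * Dv (0,1,0) F (phiJ α (x,s,t)))
      ((-(2*t/(48*α^2))) * Dv (1,0,0) F q
        + (-(2*y*t/(48*α^2))) * ((-(2*y*t/(48*α^2))) * Dv (1,0,0) (Dv (1,0,0) F) q
            + (t/4) * Dv (0,1,0) (Dv (1,0,0) F) q)
        + (t/4) * ((-(2*y*t/(48*α^2))) * Dv (1,0,0) (Dv (0,1,0) F) q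
            + (t/4) * Dv (0,1,0) (Dv (0,1,0) F) q)) y := by
    have h := (ha.mul (hasDerivAt_comp_curve hF1 (hasDerivAt_phi2 α x y t))).add
        ((hasDerivAt_comp_curve hF2 (hasDerivAt_phi2 α x y t)).const_mul (t/4))
    rw [fderiv_expand, fderiv_expand] at h
    exact h.congr_deriv (by ring)
  rw [hfunV2, hB]
  simp only [pd1, pd2]
  rw [TL.deriv, TR.deriv, hKP' q, symm2 hF q (1,0,0) (0,1,0)]
  have ht' : t ≠ 0 := ne_of_gt ht
  have hα2 : α^2 ≠ 0 := pow_ne_zero 2 hα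
  field_simp
  ring
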